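/- Sub-Gaussianity of a centered two-component Gaussian mixture (Lemma: GMM subgaussian). Let w in [0,1], mu1, mu2 in R and sigma^2 >= 0 with (1-w) mu1 + w mu2 = 0, and let Z be a real random variable with law (1-w) N(mu1, sigma^2) + w N(mu2, sigma^2). Then for every lambda in R, E[exp(lambda Z)] <= exp( (1/2) lambda^2 ( sigma^2 + (1/4)(mu1 - mu2)^2 ) ); that is, Z is sqrt(sigma^2 + (mu1-mu2)^2/4)-sub-Gaussian. -/

import Mathlib

open MeasureTheory ProbabilityTheory
open scoped ENNReal NNReal

noncomputable section

/-- Core of Hoeffding's lemma for a two-point distribution. -/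
lemma hoeff_aux {w : ℝ} (hw0 : 0 ≤ w) (hw1 : w ≤ 1) (t : ℝ) :
    1 - w + w * Real.exp t ≤ Real.exp (w * t + t ^ 2 / 8) := by
  set D : ℝ → ℝ := fun t => 1 - w + w * Real.exp t with hDdef
  have hD : ∀ s, 0 < D s := by
    intro s
    rcases eq_or_lt_of_le hw1 with h | h
    · simp only [hDdef, h]
      have := Real.exp_pos s
      linarith
    · have : 0 < 1 - w := by linarith
      have : 0 ≤ w * Real.exp s := by positivity
      simp only [hDdef]; linarith
  have hDd : ∀ s, HasDerivAt D (w * Real.exp s) s := by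
    intro s
    exact ((Real.hasDerivAt_exp s).const_mul w).const_add (1 - w)
  set f : ℝ → ℝ := fun s => w * s + s ^ 2 / 8 - Real.log (D s) with hfdef
  set g : ℝ → ℝ := fun s => w + s / 4 - w * Real.exp s / D s with hgdef
  have hfd : ∀ s, HasDerivAt f (g s) s := by
    intro s
    have h1 : HasDerivAt (fun s : ℝ => w * s + s ^ 2 / 8) (w + s / 4) s := by
      have := ((hasDerivAt_pow 2 s).div_const 8).const_add 0
      have h2 := ((hasDerivAt_id s).const_mul w).add ((hasDerivAt_pow 2 s).div_const 8)
      refine h2.congr_deriv ?_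
      ring
    have h3 : HasDerivAt (fun s => Real.log (D s)) (w * Real.exp s / D s) s :=
      (hDd s).log (hD s).ne'
    exact h1.sub h3
  have hgd : ∀ s, HasDerivAt g (1 / 4 - (1 - w) * (w * Real.exp s) / (D s) ^ 2) s := by
    intro s
    have h1 : HasDerivAt (fun s : ℝ => w + s / 4) (1 / 4) s := by
      simpa using ((hasDerivAt_id s).div_const 4).const_add w
    have h2 : HasDerivAt (fun s => w * Real.exp s / D s)
        ((w * Real.exp s * D s - w * Real.exp s * (w * Real.exp s)) / (D s) ^ 2) s :=
      ((Real.hasDerivAt_exp s).const_mul w).div (hDd s) (hD s).ne'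
    have := h1.sub h2
    refine this.congr_deriv ?_
    have : D s = 1 - w + w * Real.exp s := rfl
    rw [this]
    ring
  have hg0 : g 0 = 0 := by
    have : D 0 = 1 := by simp [hDdef]
    simp [hgdef, this]
  have hgmono : Monotone g := by
    refine monotone_of_hasDerivAt_nonneg hgd ?_
    intro s
    have hD2 : (0:ℝ) < (D s) ^ 2 := pow_pos (hD s) 2
    simp only [Pi.zero_apply]
    rw [sub_nonneg]
    rw [div_le_div_iff₀ hD2 (by norm_num : (0:ℝ) < 4)]
    have hDs : D s = 1 - w + w * Real.exp s := rfl
    rw [hDs]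
    nlinarith [sq_nonneg ((1 - w) - w * Real.exp s)]
  have hf0 : f 0 = 0 := by
    have : D 0 = 1 := by simp [hDdef]
    simp [hfdef, this]
  have hfnonneg : 0 ≤ f t := by
    rcases le_total 0 t with h | h
    · have : MonotoneOn f (Set.Ici 0) := by
        refine monotoneOn_of_hasDerivWithinAt_nonneg (convex_Ici 0)
          (fun s _ => (hfd s).continuousAt.continuousWithinAt)
          (fun s _ => (hfd s).hasDerivWithinAt) ?_
        intro s hs
        rw [interior_Ici] at hs
        have := hgmono (le_of_lt hs)
        rw [hg0] at this
        exact this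
      have := this (Set.self_mem_Ici) h h
      rwa [hf0] at this
    · have : AntitoneOn f (Set.Iic 0) := by
        refine antitoneOn_of_hasDerivWithinAt_nonpos (convex_Iic 0)
          (fun s _ => (hfd s).continuousAt.continuousWithinAt)
          (fun s _ => (hfd s).hasDerivWithinAt) ?_
        intro s hs
        rw [interior_Iic] at hs
        have := hgmono (le_of_lt hs)
        rw [hg0] at this
        exact this
      have := this h (Set.self_mem_Iic) h
      rwa [hf0] at this
  have : Real.log (D t) ≤ w * t + t ^ 2 / 8 := by
    simp only [hfdef] at hfnonneg; linarith
  calc D t = Real.exp (Real.log (D t)) := (Real.exp_log (hD t)).symm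
    _ ≤ Real.exp (w * t + t ^ 2 / 8) := Real.exp_le_exp.mpr this

lemma pdf_mul_exp (μ : ℝ) (v : ℝ≥0) (hv : v ≠ 0) (l z : ℝ) :
    Real.exp (l * z) * gaussianPDFReal μ v z =
      Real.exp (l * μ + l ^ 2 * v / 2) * gaussianPDFReal (μ + l * v) v z := by
  have hv' : (0:ℝ) < (v:ℝ) := by positivity
  simp only [gaussianPDFReal]
  rw [mul_left_comm, mul_left_comm (Real.exp _), ← Real.exp_add, ← Real.exp_add]
  congr 1
  field_simp
  ring

lemma integrable_exp_mul_gaussianReal (μ : ℝ) (v : ℝ≥0) (l : ℝ) :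
    Integrable (fun z => Real.exp (l * z)) (gaussianReal μ v) := by
  rcases eq_or_ne v 0 with hv | hv
  · rw [hv, gaussianReal_zero_var]
    refine ⟨(Real.continuous_exp.comp
      (continuous_const.mul continuous_id)).measurable.aestronglyMeasurable, ?_⟩
    simp [HasFiniteIntegral, lintegral_dirac]
  · rw [gaussianReal_of_var_ne_zero μ hv]
    rw [integrable_withDensity_iff (measurable_gaussianPDF μ v)
      (Filter.Eventually.of_forall fun x => ENNReal.ofReal_lt_top)]
    have : (fun z => Real.exp (l * z) * (gaussianPDF μ v z).toReal) =
        fun z => Real.exp (l * μ + l ^ 2 * v / 2) * gaussianPDFReal (μ + l * v) v z := by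
      ext z
      rw [gaussianPDF, ENNReal.toReal_ofReal (gaussianPDFReal_nonneg μ v z)]
      exact pdf_mul_exp μ v hv l z
    rw [this]
    exact (integrable_gaussianPDFReal _ _).const_mul _

lemma integral_exp_mul_gaussianReal (μ : ℝ) (v : ℝ≥0) (l : ℝ) :
    ∫ z, Real.exp (l * z) ∂(gaussianReal μ v) = Real.exp (l * μ + l ^ 2 * v / 2) := by
  rcases eq_or_ne v 0 with hv | hv
  · rw [hv, gaussianReal_zero_var, integral_dirac]
    simp
  · rw [gaussianReal_of_var_ne_zero μ hv]
    have hd : (gaussianPDF μ v) =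
        fun z => ((Real.toNNReal (gaussianPDFReal μ v z) : ℝ≥0) : ℝ≥0∞) := rfl
    rw [hd, integral_withDensity_eq_integral_smul
      ((measurable_gaussianPDFReal μ v).real_toNNReal) _]
    have : (fun z => Real.toNNReal (gaussianPDFReal μ v z) • Real.exp (l * z)) =
        fun z => Real.exp (l * μ + l ^ 2 * v / 2) * gaussianPDFReal (μ + l * v) v z := by
      ext z
      rw [NNReal.smul_def, smul_eq_mul, Real.coe_toNNReal _ (gaussianPDFReal_nonneg μ v z),
        mul_comm]
      exact pdf_mul_exp μ v hv l z
    rw [this, integral_const_mul, integral_gaussianPDFReal_eq_one _ hv, mul_one]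

/-- The two-component Gaussian mixture `(1-w) N(μ1, σ²) + w N(μ2, σ²)` on `ℝ`. -/
def gaussMix2 (w μ1 μ2 σ2 : ℝ) : Measure ℝ :=
  ENNReal.ofReal (1 - w) • gaussianReal μ1 σ2.toNNReal +
    ENNReal.ofReal w • gaussianReal μ2 σ2.toNNReal

/-- **Sub-Gaussianity of a centered two-component Gaussian mixture**: if
`(1-w) μ1 + w μ2 = 0`, then the mixture is `√(σ² + (μ1-μ2)²/4)`-sub-Gaussian. -/
theorem gaussMix2_subGaussian (w μ1 μ2 σ2 : ℝ) (hσ : 0 ≤ σ2)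
    (hw0 : 0 ≤ w) (hw1 : w ≤ 1) (hmean : (1 - w) * μ1 + w * μ2 = 0) (l : ℝ) :
    ∫ z, Real.exp (l * z) ∂(gaussMix2 w μ1 μ2 σ2) ≤
      Real.exp (1 / 2 * l ^ 2 * (σ2 + (μ1 - μ2) ^ 2 / 4)) := by
  have hvc : ((σ2.toNNReal : ℝ≥0) : ℝ) = σ2 := Real.coe_toNNReal σ2 hσ
  have h1 : Integrable (fun z => Real.exp (l * z))
      (ENNReal.ofReal (1 - w) • gaussianReal μ1 σ2.toNNReal) :=
    (integrable_exp_mul_gaussianReal μ1 _ l).smul_measure ENNReal.ofReal_ne_top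
  have h2 : Integrable (fun z => Real.exp (l * z))
      (ENNReal.ofReal w • gaussianReal μ2 σ2.toNNReal) :=
    (integrable_exp_mul_gaussianReal μ2 _ l).smul_measure ENNReal.ofReal_ne_top
  rw [gaussMix2, integral_add_measure h1 h2, integral_smul_measure, integral_smul_measure,
    integral_exp_mul_gaussianReal, integral_exp_mul_gaussianReal,
    ENNReal.toReal_ofReal (by linarith : (0:ℝ) ≤ 1 - w), ENNReal.toReal_ofReal hw0,
    smul_eq_mul, smul_eq_mul, hvc]
  set t := l * (μ2 - μ1) with ht
  have e1 : l * μ1 + l ^ 2 * σ2 / 2 = l ^ 2 * σ2 / 2 - w * t := by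
    rw [ht]; linear_combination l * hmean
  have e2 : l * μ2 + l ^ 2 * σ2 / 2 = (l ^ 2 * σ2 / 2 - w * t) + t := by
    rw [ht]; linear_combination l * hmean
  rw [e1, e2, Real.exp_add]
  set c := l ^ 2 * σ2 / 2 - w * t with hc
  have hrw : (1 - w) * Real.exp c + w * (Real.exp c * Real.exp t) =
      Real.exp c * (1 - w + w * Real.exp t) := by ring
  rw [hrw]
  have key := mul_le_mul_of_nonneg_left (hoeff_aux hw0 hw1 t) (Real.exp_nonneg c)
  refine key.trans (le_of_eq ?_)
  rw [← Real.exp_add]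
  congr 1
  rw [hc, ht]
  ring
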